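/- For every v = (v₁, v₂) ∈ V_K, the divergence div v = ∂v₁/∂x + ∂v₂/∂y is a constant polynomial; moreover, div v = 0 if and only if v = curl w for some w ∈ W_K. In other words, the kernel of the divergence on V_K is exactly {curl w : w ∈ W_K}. -/

import Mathlib

open MvPolynomial

/-- Membership in the shape function space `W_K = P₃ ⊕ span{x⁴, y⁴}`. -/
def memWK (w : MvPolynomial (Fin 2) ℝ) : Prop :=
  ∃ (p : MvPolynomial (Fin 2) ℝ) (c d : ℝ),
    p.totalDegree ≤ 3 ∧ w = p + C c * X 0 ^ 4 + C d * X 1 ^ 4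

/-- Membership in the vector shape function space
`V_K = [P₁]² ⊕ span{curl x³, curl x²y, curl xy², curl y³, curl x⁴, curl y⁴}`,
where `curl φ = (∂φ/∂y, −∂φ/∂x)`. -/
def memVK (v : MvPolynomial (Fin 2) ℝ × MvPolynomial (Fin 2) ℝ) : Prop :=
  ∃ (p q φ : MvPolynomial (Fin 2) ℝ) (c1 c2 c3 c4 c5 c6 : ℝ),
    p.totalDegree ≤ 1 ∧ q.totalDegree ≤ 1 ∧
    φ = C c1 * X 0 ^ 3 + C c2 * X 0 ^ 2 * X 1 + C c3 * X 0 * X 1 ^ 2 +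
        C c4 * X 1 ^ 3 + C c5 * X 0 ^ 4 + C c6 * X 1 ^ 4 ∧
    v.1 = p + pderiv 1 φ ∧ v.2 = q - pderiv 0 φ

/-! Since `div ∘ curl = 0`, the divergence of `v = (p, q) + curl φ ∈ V_K` is that of its
linear part `(a + b x + c y, d + e x + f y)`, namely the constant `b + f`. When `b + f = 0`
this linear field is `curl ψ` for the quadratic stream function
`ψ = a y - d x + b x y + c y² / 2 - e x² / 2`, so `v = curl (ψ + φ)` with `ψ + φ ∈ W_K`. -/

namespace MvPolynomial

theorem pderiv_pderiv_comm {σ R : Type*} [CommSemiring R] (i j : σ) (p : MvPolynomial σ R) :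
    pderiv i (pderiv j p) = pderiv j (pderiv i p) := by
  classical
  induction p using MvPolynomial.induction_on with
  | C a => simp
  | add p q hp hq => simp [hp, hq]
  | mul_X p k hp =>
    simp only [Derivation.leibniz, pderiv_X, map_add, smul_eq_mul, hp, Pi.single_apply,
      apply_ite, pderiv_one, map_zero]
    split_ifs <;> ring

theorem eq_C_add_C_mul_X_add_C_mul_X_of_totalDegree_le_one {R : Type*} [CommSemiring R]
    {p : MvPolynomial (Fin 2) R} (hp : p.totalDegree ≤ 1) :
    p = C (coeff 0 p) + C (coeff (Finsupp.single 0 1) p) * X 0 +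
        C (coeff (Finsupp.single 1 1) p) * X 1 := by
  ext m
  obtain ⟨a, b, rfl⟩ : ∃ a b, m = Finsupp.single 0 a + Finsupp.single 1 b :=
    ⟨m 0, m 1, by ext i; fin_cases i <;> simp⟩
  simp only [coeff_add, coeff_C, coeff_C_mul, coeff_X, Finsupp.ext_iff, Fin.forall_fin_two,
    Finsupp.coe_add, Pi.add_apply, Finsupp.single_eq_same, Finsupp.single_eq_of_ne, ne_eq,
    zero_ne_one, one_ne_zero, not_false_eq_true, Finsupp.coe_zero, Pi.zero_apply, add_zero,
    zero_add, mul_ite, mul_one, mul_zero]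
  by_cases hab : a + b ≤ 1
  · obtain ⟨rfl, rfl⟩ | ⟨rfl, rfl⟩ | ⟨rfl, rfl⟩ :
        (a = 0 ∧ b = 0) ∨ (a = 1 ∧ b = 0) ∨ (a = 0 ∧ b = 1) := by omega
    all_goals simp
  · rw [coeff_eq_zero_of_totalDegree_lt, if_neg (by omega), if_neg (by omega), if_neg (by omega)]
    · simp
    · rw [← Finsupp.degree_apply, map_add, Finsupp.degree_single, Finsupp.degree_single]
      omega

section VectorCalculus

variable {R : Type*} [CommRing R]

noncomputable def curl (φ : MvPolynomial (Fin 2) R) :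
    MvPolynomial (Fin 2) R × MvPolynomial (Fin 2) R :=
  (pderiv 1 φ, -pderiv 0 φ)

noncomputable def divergence (v : MvPolynomial (Fin 2) R × MvPolynomial (Fin 2) R) :
    MvPolynomial (Fin 2) R :=
  pderiv 0 v.1 + pderiv 1 v.2

theorem curl_add (φ ψ : MvPolynomial (Fin 2) R) : curl (φ + ψ) = curl φ + curl ψ := by
  simp [curl, add_comm]

theorem divergence_add (v w : MvPolynomial (Fin 2) R × MvPolynomial (Fin 2) R) :
    divergence (v + w) = divergence v + divergence w := by
  simp only [divergence, Prod.fst_add, Prod.snd_add, map_add]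
  ring

theorem divergence_curl (φ : MvPolynomial (Fin 2) R) : divergence (curl φ) = 0 := by
  rw [divergence, curl, map_neg, pderiv_pderiv_comm 0 1, add_neg_cancel]

theorem divergence_of_totalDegree_le_one {p q : MvPolynomial (Fin 2) R}
    (hp : p.totalDegree ≤ 1) (hq : q.totalDegree ≤ 1) :
    divergence (p, q) =
      C (coeff (Finsupp.single 0 1) p + coeff (Finsupp.single 1 1) q) := by
  conv_lhs => rw [divergence, eq_C_add_C_mul_X_add_C_mul_X_of_totalDegree_le_one hp,
    eq_C_add_C_mul_X_add_C_mul_X_of_totalDegree_le_one hq]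
  simp [pderiv_X]

end VectorCalculus

theorem exists_eq_curl_of_divergence_eq_zero {K : Type*} [Field K] [CharZero K]
    {p q : MvPolynomial (Fin 2) K} (hp : p.totalDegree ≤ 1) (hq : q.totalDegree ≤ 1)
    (hdiv : divergence (p, q) = 0) :
    ∃ ψ : MvPolynomial (Fin 2) K, ψ.totalDegree ≤ 2 ∧ (p, q) = curl ψ := by
  rw [divergence_of_totalDegree_le_one hp hq, C_eq_zero, add_eq_zero_iff_eq_neg] at hdiv
  have hp' := eq_C_add_C_mul_X_add_C_mul_X_of_totalDegree_le_one hp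
  have hq' := eq_C_add_C_mul_X_add_C_mul_X_of_totalDegree_le_one hq
  generalize coeff 0 p = a, coeff (Finsupp.single 0 1) p = b, coeff (Finsupp.single 1 1) p = c,
    coeff 0 q = d, coeff (Finsupp.single 0 1) q = e, coeff (Finsupp.single 1 1) q = f
    at hp' hq' hdiv
  subst hp' hq' hdiv
  refine ⟨C a * X 1 - C d * X 0 - C f * X 0 * X 1 + C (c / 2) * X 1 ^ 2 - C (e / 2) * X 0 ^ 2,
    by grind [totalDegree_add, totalDegree_sub, totalDegree_mul, totalDegree_C, totalDegree_X,
      totalDegree_X_pow], ?_⟩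
  have hhalf (x : K) : C (x / 2) * (2 : MvPolynomial (Fin 2) K) = C x := by
    rw [← map_ofNat C 2, ← C_mul, div_mul_cancel₀ x two_ne_zero]
  ext : 1 <;> simp only [curl, map_add, map_sub, map_neg, Derivation.leibniz,
    Derivation.leibniz_pow, pderiv_X, derivation_C, Pi.single_apply, smul_eq_mul, nsmul_eq_mul,
    zero_ne_one, one_ne_zero, if_true, if_false]
  · linear_combination -X 1 * hhalf c
  · linear_combination -X 0 * hhalf e

end MvPolynomial

theorem memWK_add_of_totalDegree_le {ψ w : MvPolynomial (Fin 2) ℝ} (hψ : ψ.totalDegree ≤ 3)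
    (hw : memWK w) : memWK (ψ + w) := by
  obtain ⟨p, c, d, hp, rfl⟩ := hw
  exact ⟨ψ + p, c, d, (totalDegree_add _ _).trans (max_le hψ hp), by ring⟩

theorem memWK_cubic_add_quartic (c1 c2 c3 c4 c5 c6 : ℝ) :
    memWK (C c1 * X 0 ^ 3 + C c2 * X 0 ^ 2 * X 1 + C c3 * X 0 * X 1 ^ 2 +
      C c4 * X 1 ^ 3 + C c5 * X 0 ^ 4 + C c6 * X 1 ^ 4) :=
  ⟨_, c5, c6, by grind [totalDegree_add, totalDegree_mul, totalDegree_C, totalDegree_X,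
    totalDegree_X_pow], rfl⟩

theorem stmt2 (v : MvPolynomial (Fin 2) ℝ × MvPolynomial (Fin 2) ℝ) (hv : memVK v) :
    (∃ c : ℝ, pderiv 0 v.1 + pderiv 1 v.2 = C c) ∧
    (pderiv 0 v.1 + pderiv 1 v.2 = 0 ↔
      ∃ w : MvPolynomial (Fin 2) ℝ, memWK w ∧ v.1 = pderiv 1 w ∧ v.2 = -pderiv 0 w) := by
  obtain ⟨p, q, φ, c1, c2, c3, c4, c5, c6, hp, hq, hφ, hv1, hv2⟩ := hv
  have hv : v = (p, q) + curl φ :=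
    Prod.ext (by simp [hv1, curl]) (by simp [hv2, curl, sub_eq_add_neg])
  have hdiv : pderiv 0 v.1 + pderiv 1 v.2 = divergence (p, q) := by
    rw [← divergence, hv, divergence_add, divergence_curl, add_zero]
  have hcurl (w : MvPolynomial (Fin 2) ℝ) :
      (v.1 = pderiv 1 w ∧ v.2 = -pderiv 0 w) ↔ v = curl w := by
    rw [Prod.ext_iff]; rfl
  refine ⟨⟨_, hdiv.trans (divergence_of_totalDegree_le_one hp hq)⟩, fun h0 => ?_, ?_⟩
  · obtain ⟨ψ, hψ, hpq⟩ := exists_eq_curl_of_divergence_eq_zero hp hq (hdiv ▸ h0)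
    refine ⟨ψ + φ, memWK_add_of_totalDegree_le (hψ.trans (by norm_num))
      (hφ ▸ memWK_cubic_add_quartic ..), ?_⟩
    rw [hcurl, hv, hpq, curl_add]
  · rintro ⟨w, -, hw⟩
    rw [hcurl] at hw
    rw [← divergence, hw, divergence_curl]
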